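/- arXiv:1612.08654 — 2 statements merged into one kernel-verified Lean document; each statement's English description precedes it below -/
import Mathlib

section
/- With α defined as the minimizer of χ[σ=1]·d(i,n−1) + Σ_{j=0}^{N−1} d̂(i, i·t^h + j mod N) over i ∈ {0,...,N−1}: if χ[σ=1]·d(α,n−1) + Σ_{j=0}^{N−1} d̂(α, α·t^h + j mod N) < Σ_{j=0}^{n−1} d(n−1, j), then Σ_{j=0}^{n−1} d(α, j) ≤ 2h · min_{i=0}^{n−1} Σ_{j=0}^{n−1} d(i,j); otherwise Σ_{j=0}^{n−1} d(n−1, j) ≤ 2h · min_{i=0}^{n−1} Σ_{j=0}^{n−1} d(i,j). -/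
/-- The mod-`N` extension of a metric `d` on `{0,...,N-1}`. -/
def dmod (d : ℕ → ℕ → ℝ) (N x y : ℕ) : ℝ := d (x % N) (y % N)

/-- The `r`-th digit of `j` in base `t`. -/
def digit (t j r : ℕ) : ℕ := j / t ^ r % t

/-- The pseudo-distance `d̂(i, i·t^h + j mod N)`, defined as the length of the
`t`-ary chain from `i` to `i·t^h + j` determined by the base-`t` digits of `j`. -/
def hatd (d : ℕ → ℕ → ℝ) (N t h i j : ℕ) : ℝ :=
  ∑ k ∈ Finset.range h,
    dmod d N
      (i * t ^ k + ∑ ℓ ∈ Finset.range k, digit t j (h - 1 - ℓ) * t ^ (k - 1 - ℓ))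
      (i * t ^ (k + 1) + ∑ ℓ ∈ Finset.range (k + 1), digit t j (h - 1 - ℓ) * t ^ (k - ℓ))

/-!
Following the `t`-ary chain from `i` to `i * t ^ h + j` and applying the triangle inequality
shows that `∑ j, hatd d N t h i j` dominates the cost `∑ j, d i j` of `i`, because
`j ↦ i * t ^ h + j` permutes the residues mod `N`. Conversely, every edge of a chain joins
`i * t ^ k + p` to `i * t ^ (k + 1) + q`; as `t` is coprime to `N`, both endpoints run over all
residues with `i`, so routing each edge through any point `m` bounds the average of the chain sums
over `i` by `2h` times the cost of `m`, and the minimiser `α` is at most that average.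
When `σ = 1` the extra point `n - 1` adds its cost `F` to the average, so the bound only survives
for the minimum of `F` and the score `X` of `α`: if `F` exceeds `2h` times the cost of `m`, then
`F ≤ cost m + N * d m (n - 1)` makes `d m (n - 1)` large enough to absorb the extra `F / N`.
-/

open Finset

theorem sum_range_mod_affine {N c : ℕ} (hc : c.Coprime N) (q : ℕ) (f : ℕ → ℝ) :
    ∑ i ∈ range N, f ((i * c + q) % N) = ∑ v ∈ range N, f v := by
  have hmaps : Set.MapsTo (fun i => (i * c + q) % N) (range N : Set ℕ) (range N : Set ℕ) :=
    fun i hi => mem_range.2 (Nat.mod_lt _ (Nat.zero_lt_of_lt (mem_range.1 hi)))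
  have hinj : Set.InjOn (fun i => (i * c + q) % N) (range N : Set ℕ) := fun i hi i' hi' h =>
    ((Nat.ModEq.add_right_cancel' q h).cancel_right_of_coprime hc.symm).eq_of_lt_of_lt
      (mem_range.1 hi) (mem_range.1 hi')
  exact sum_nbij _ hmaps hinj (surjOn_of_injOn_of_card_le _ hmaps hinj le_rfl) fun _ _ => rfl

theorem sum_digit_mul_pow (t j H : ℕ) : ∑ r ∈ range H, digit t j r * t ^ r = j % t ^ H := by
  induction H with
  | zero => simp [Nat.mod_one]
  | succ H ih => rw [sum_range_succ, ih, Nat.mod_pow_succ, digit, mul_comm]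

/-- The `k`-th vertex of the chain defining `hatd d N t h i j` is `i * t ^ k + chainOffset t h j k`:
`i` followed by the `k` leading digits of `j`, read as an `h`-digit base-`t` word. -/
def chainOffset (t h j k : ℕ) : ℕ := ∑ ℓ ∈ range k, digit t j (h - 1 - ℓ) * t ^ (k - 1 - ℓ)

theorem hatd_eq_sum_chainOffset (d : ℕ → ℕ → ℝ) (N t h i j : ℕ) :
    hatd d N t h i j = ∑ k ∈ range h,
      dmod d N (i * t ^ k + chainOffset t h j k) (i * t ^ (k + 1) + chainOffset t h j (k + 1)) :=
  rfl

theorem chainOffset_zero (t h j : ℕ) : chainOffset t h j 0 = 0 := rfl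

theorem chainOffset_self (t h j : ℕ) : chainOffset t h j h = j % t ^ h := by
  rw [chainOffset, ← sum_digit_mul_pow]
  exact sum_range_reflect (fun r => digit t j r * t ^ r) h

theorem le_sum_range_of_triangle {α : Type*} {D : α → α → ℝ} (hD0 : ∀ x, D x x = 0)
    (hDtri : ∀ x y z, D x z ≤ D x y + D y z) (g : ℕ → α) (H : ℕ) :
    D (g 0) (g H) ≤ ∑ k ∈ range H, D (g k) (g (k + 1)) := by
  induction H with
  | zero => simp [hD0]
  | succ H ih => rw [sum_range_succ]; linarith [hDtri (g 0) (g H) (g (H + 1))]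

theorem le_pow_of_ceil_rpow_le {n t h : ℕ} (hh : h ≠ 0)
    (htl : ⌈(n : ℝ) ^ ((1 : ℝ) / h)⌉₊ ≤ t) : n ≤ t ^ h := by
  have hroot : (n : ℝ) ^ ((1 : ℝ) / h) ≤ t := (Nat.le_ceil _).trans (by exact_mod_cast htl)
  have := pow_le_pow_left₀ (by positivity) hroot h
  rw [one_div, Real.rpow_inv_natCast_pow (Nat.cast_nonneg n) hh] at this
  exact_mod_cast this

theorem le_two_mul_of_average_le {Y F C β h N : ℝ} (hh : 1 ≤ h) (hN : 0 < N) (hC : 0 ≤ C)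
    (hβ : 0 ≤ β) (hYF : Y ≤ F) (hFC : F ≤ C + N * β) (hY : N * Y ≤ F + 2 * h * N * C) :
    Y ≤ 2 * h * (C + β) := by
  by_cases hF : F ≤ 2 * h * (C + β)
  · linarith
  -- otherwise `F ≤ C + N * β` forces `β` to dominate `C`, which the average bound absorbs
  have hCβ : C ≤ (2 * h - 1) * (N * β) := by
    have hNβ : N * β ≤ (2 * h - 1) * (N * β) := by nlinarith [mul_nonneg hN.le hβ]
    nlinarith [mul_nonneg (by linarith : (0 : ℝ) ≤ h) hβ]
  have : N * Y ≤ N * (2 * h * (C + β)) := by nlinarith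
  exact le_of_mul_le_mul_left this hN

theorem forall_le_of_min_le {C : ℕ → ℝ} {X c : ℝ} {a b n : ℕ} (hX : C a ≤ X)
    (hmin : ∀ i < n, min X (C b) ≤ c * C i) :
    (X < C b → ∀ i < n, C a ≤ c * C i) ∧ (¬X < C b → ∀ i < n, C b ≤ c * C i) :=
  ⟨fun hlt i hi => hX.trans (by simpa [min_eq_left hlt.le] using hmin i hi),
    fun hge i hi => by simpa [min_eq_right (not_lt.1 hge)] using hmin i hi⟩

section Metric

variable {d : ℕ → ℕ → ℝ} {n N : ℕ}

theorem nonneg_of_triangle (hd0 : ∀ x < n, d x x = 0)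
    (hdsymm : ∀ x < n, ∀ y < n, d x y = d y x)
    (hdtri : ∀ x < n, ∀ y < n, ∀ z < n, d x z ≤ d x y + d y z) {x y : ℕ} (hx : x < n)
    (hy : y < n) : 0 ≤ d x y := by
  have := hdtri x hx y hy x hx
  rw [hd0 x hx, hdsymm y hy x hx] at this
  linarith

theorem sum_range_dist_le_add (hdtri : ∀ x < n, ∀ y < n, ∀ z < n, d x z ≤ d x y + d y z)
    {k x y : ℕ} (hk : k ≤ n) (hx : x < n) (hy : y < n) :
    ∑ j ∈ range k, d x j ≤ ∑ j ∈ range k, d y j + k * d x y := calc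
  ∑ j ∈ range k, d x j ≤ ∑ j ∈ range k, (d x y + d y j) :=
    sum_le_sum fun j hj => hdtri x hx y hy j ((mem_range.1 hj).trans_le hk)
  _ = ∑ j ∈ range k, d y j + k * d x y := by
    rw [sum_add_distrib, sum_const, card_range, nsmul_eq_mul, add_comm]

theorem dmod_self (hN : 0 < N) (hNn : N ≤ n) (hd0 : ∀ x < n, d x x = 0) (x : ℕ) :
    dmod d N x x = 0 :=
  hd0 _ ((Nat.mod_lt x hN).trans_le hNn)

theorem dmod_triangle (hN : 0 < N) (hNn : N ≤ n)
    (hdtri : ∀ x < n, ∀ y < n, ∀ z < n, d x z ≤ d x y + d y z) (x y z : ℕ) :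
    dmod d N x z ≤ dmod d N x y + dmod d N y z :=
  hdtri _ ((Nat.mod_lt x hN).trans_le hNn) _ ((Nat.mod_lt y hN).trans_le hNn) _
    ((Nat.mod_lt z hN).trans_le hNn)

theorem dmod_le_hatd (hN : 0 < N) (hNn : N ≤ n) (hd0 : ∀ x < n, d x x = 0)
    (hdtri : ∀ x < n, ∀ y < n, ∀ z < n, d x z ≤ d x y + d y z) {t h : ℕ} (i : ℕ) {j : ℕ}
    (hj : j < t ^ h) : dmod d N i (i * t ^ h + j) ≤ hatd d N t h i j := by
  have := le_sum_range_of_triangle (dmod_self hN hNn hd0) (dmod_triangle hN hNn hdtri)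
    (fun k => i * t ^ k + chainOffset t h j k) h
  simp only [pow_zero, mul_one, chainOffset_zero, add_zero, chainOffset_self,
    Nat.mod_eq_of_lt hj] at this
  rwa [hatd_eq_sum_chainOffset]

theorem sum_dist_le_sum_hatd (hNn : N ≤ n) (hd0 : ∀ x < n, d x x = 0)
    (hdtri : ∀ x < n, ∀ y < n, ∀ z < n, d x z ≤ d x y + d y z) {t h : ℕ} (hNt : N ≤ t ^ h)
    {i : ℕ} (hi : i < N) : ∑ v ∈ range N, d i v ≤ ∑ j ∈ range N, hatd d N t h i j := calc
  ∑ v ∈ range N, d i v = ∑ j ∈ range N, dmod d N i (i * t ^ h + j) := by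
    rw [← sum_range_mod_affine (Nat.coprime_one_left N) (i * t ^ h) (d i)]
    refine sum_congr rfl fun j _ => ?_
    rw [dmod, Nat.mod_eq_of_lt hi, mul_one, add_comm]
  _ ≤ ∑ j ∈ range N, hatd d N t h i j := sum_le_sum fun j hj =>
    dmod_le_hatd (Nat.zero_lt_of_lt hi) hNn hd0 hdtri i ((mem_range.1 hj).trans_le hNt)

theorem sum_dmod_affine_le (hNn : N ≤ n) (hdsymm : ∀ x < n, ∀ y < n, d x y = d y x)
    (hdtri : ∀ x < n, ∀ y < n, ∀ z < n, d x z ≤ d x y + d y z) {a b : ℕ} (ha : a.Coprime N)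
    (hb : b.Coprime N) (p q : ℕ) {m : ℕ} (hm : m < N) :
    ∑ i ∈ range N, dmod d N (i * a + p) (i * b + q) ≤ 2 * ∑ v ∈ range N, d m v := by
  have hN : 0 < N := Nat.zero_lt_of_lt hm
  have hmod : ∀ x, x % N < n := fun x => (Nat.mod_lt x hN).trans_le hNn
  calc ∑ i ∈ range N, dmod d N (i * a + p) (i * b + q)
      ≤ ∑ i ∈ range N, (d ((i * a + p) % N) m + d m ((i * b + q) % N)) :=
        sum_le_sum fun i _ => hdtri _ (hmod _) m (hm.trans_le hNn) _ (hmod _)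
    _ = ∑ v ∈ range N, d v m + ∑ v ∈ range N, d m v := by
        rw [sum_add_distrib, sum_range_mod_affine ha p (d · m), sum_range_mod_affine hb q (d m)]
    _ = 2 * ∑ v ∈ range N, d m v := by
        rw [two_mul]
        congr 1
        exact sum_congr rfl fun v hv =>
          hdsymm v ((mem_range.1 hv).trans_le hNn) m (hm.trans_le hNn)

theorem sum_sum_hatd_le (hNn : N ≤ n) (hdsymm : ∀ x < n, ∀ y < n, d x y = d y x)
    (hdtri : ∀ x < n, ∀ y < n, ∀ z < n, d x z ≤ d x y + d y z) {t h : ℕ} (hco : t.Coprime N)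
    {m : ℕ} (hm : m < N) :
    ∑ i ∈ range N, ∑ j ∈ range N, hatd d N t h i j ≤ 2 * h * N * ∑ v ∈ range N, d m v := calc
  ∑ i ∈ range N, ∑ j ∈ range N, hatd d N t h i j
      = ∑ j ∈ range N, ∑ k ∈ range h, ∑ i ∈ range N, dmod d N
          (i * t ^ k + chainOffset t h j k) (i * t ^ (k + 1) + chainOffset t h j (k + 1)) := by
    simp only [hatd_eq_sum_chainOffset]
    rw [sum_comm]
    exact sum_congr rfl fun j _ => sum_comm
  _ ≤ ∑ j ∈ range N, ∑ k ∈ range h, 2 * ∑ v ∈ range N, d m v :=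
    sum_le_sum fun j _ => sum_le_sum fun k _ =>
      sum_dmod_affine_le hNn hdsymm hdtri (hco.pow_left k) (hco.pow_left (k + 1)) _ _ hm
  _ = 2 * h * N * ∑ v ∈ range N, d m v := by
    simp only [sum_const, card_range, nsmul_eq_mul]
    ring

theorem sum_hatd_le_of_forall_le (hNn : N ≤ n) (hdsymm : ∀ x < n, ∀ y < n, d x y = d y x)
    (hdtri : ∀ x < n, ∀ y < n, ∀ z < n, d x z ≤ d x y + d y z) {t h α : ℕ} (hco : t.Coprime N)
    (hαmin : ∀ i < N, ∑ j ∈ range N, hatd d N t h α j ≤ ∑ j ∈ range N, hatd d N t h i j)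
    {m : ℕ} (hm : m < N) :
    ∑ j ∈ range N, hatd d N t h α j ≤ 2 * h * ∑ v ∈ range N, d m v := by
  have hN : (0 : ℝ) < N := by exact_mod_cast Nat.zero_lt_of_lt hm
  have hαavg : N * ∑ j ∈ range N, hatd d N t h α j ≤
      ∑ i ∈ range N, ∑ j ∈ range N, hatd d N t h i j := by
    have := card_nsmul_le_sum (range N) _ _ fun i hi => hαmin i (mem_range.1 hi)
    rwa [card_range, nsmul_eq_mul] at this
  have := sum_sum_hatd_le (h := h) hNn hdsymm hdtri hco hm
  exact le_of_mul_le_mul_left (by linarith) hN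

theorem mul_le_sum_dist_add_of_forall_le {t h α : ℕ} (hd0 : ∀ x < N + 1, d x x = 0)
    (hdsymm : ∀ x < N + 1, ∀ y < N + 1, d x y = d y x)
    (hdtri : ∀ x < N + 1, ∀ y < N + 1, ∀ z < N + 1, d x z ≤ d x y + d y z) (hco : t.Coprime N)
    (hαmin : ∀ i < N, d α N + ∑ j ∈ range N, hatd d N t h α j ≤
      d i N + ∑ j ∈ range N, hatd d N t h i j)
    {m : ℕ} (hm : m < N) :
    N * (d α N + ∑ j ∈ range N, hatd d N t h α j) ≤
      ∑ j ∈ range (N + 1), d N j + 2 * h * N * ∑ v ∈ range N, d m v := calc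
  N * (d α N + ∑ j ∈ range N, hatd d N t h α j)
      ≤ ∑ i ∈ range N, (d i N + ∑ j ∈ range N, hatd d N t h i j) := by
    have := card_nsmul_le_sum (range N) _ _ fun i hi => hαmin i (mem_range.1 hi)
    rwa [card_range, nsmul_eq_mul] at this
  _ = ∑ j ∈ range (N + 1), d N j + ∑ i ∈ range N, ∑ j ∈ range N, hatd d N t h i j := by
    rw [sum_add_distrib, sum_range_succ, hd0 N N.lt_succ_self, add_zero]
    congr 1
    exact sum_congr rfl fun i hi =>
      hdsymm i ((mem_range.1 hi).trans N.lt_succ_self) N N.lt_succ_self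
  _ ≤ ∑ j ∈ range (N + 1), d N j + 2 * h * N * ∑ v ∈ range N, d m v := by
    grw [sum_sum_hatd_le N.le_succ hdsymm hdtri hco hm]

theorem min_le_two_mul_sum_dist {t h α : ℕ} (hh : 1 ≤ h) (hd0 : ∀ x < N + 1, d x x = 0)
    (hdsymm : ∀ x < N + 1, ∀ y < N + 1, d x y = d y x)
    (hdtri : ∀ x < N + 1, ∀ y < N + 1, ∀ z < N + 1, d x z ≤ d x y + d y z) (hco : t.Coprime N)
    (hαmin : ∀ i < N, d α N + ∑ j ∈ range N, hatd d N t h α j ≤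
      d i N + ∑ j ∈ range N, hatd d N t h i j)
    {m : ℕ} (hm : m < N + 1) :
    min (d α N + ∑ j ∈ range N, hatd d N t h α j) (∑ j ∈ range (N + 1), d N j) ≤
      2 * h * ∑ j ∈ range (N + 1), d m j := by
  have hNN := N.lt_succ_self
  rcases Nat.lt_succ_iff_lt_or_eq.1 hm with hmN | hmN
  · have hN : (0 : ℝ) < N := by exact_mod_cast Nat.zero_lt_of_lt hmN
    have hFm : ∑ j ∈ range (N + 1), d N j ≤ ∑ v ∈ range N, d m v + N * d m N := by
      rw [sum_range_succ, hd0 N hNN, add_zero, hdsymm m hm N hNN]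
      exact sum_range_dist_le_add hdtri N.le_succ hNN hm
    rw [sum_range_succ (d m)]
    refine le_two_mul_of_average_le (by exact_mod_cast hh) hN
      (sum_nonneg fun v hv => nonneg_of_triangle hd0 hdsymm hdtri hm
        ((mem_range.1 hv).trans hNN))
      (nonneg_of_triangle hd0 hdsymm hdtri hm hNN) (min_le_right _ _) hFm ?_
    exact (mul_le_mul_of_nonneg_left (min_le_left _ _) hN.le).trans
      (mul_le_sum_dist_add_of_forall_le hd0 hdsymm hdtri hco hαmin hmN)
  · rw [hmN]
    have hF0 : 0 ≤ ∑ j ∈ range (N + 1), d N j :=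
      sum_nonneg fun j hj => nonneg_of_triangle hd0 hdsymm hdtri hNN (mem_range.1 hj)
    have h2h : (1 : ℝ) ≤ 2 * h := by
      have : (1 : ℝ) ≤ h := by exact_mod_cast hh
      linarith
    exact (min_le_right _ _).trans (le_mul_of_one_le_left hF0 h2h)

end Metric

theorem stmt_8_general (n h t σ N : ℕ) (hh : 2 ≤ h)
    (htl : ⌈(n : ℝ) ^ ((1 : ℝ) / h)⌉₊ ≤ t)
    (hσ : σ ≤ 1) (hco : Nat.Coprime t (n - σ)) (hNdef : N = n - σ)
    (d : ℕ → ℕ → ℝ)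
    (hd0 : ∀ x < n, d x x = 0)
    (hdsymm : ∀ x < n, ∀ y < n, d x y = d y x)
    (hdtri : ∀ x < n, ∀ y < n, ∀ z < n, d x z ≤ d x y + d y z)
    (α : ℕ) (hα : α < N)
    (hαmin : ∀ i < N,
      (if σ = 1 then d α (n - 1) else 0) + ∑ j ∈ Finset.range N, hatd d N t h α j ≤
      (if σ = 1 then d i (n - 1) else 0) + ∑ j ∈ Finset.range N, hatd d N t h i j) :
    ((if σ = 1 then d α (n - 1) else 0) + ∑ j ∈ Finset.range N, hatd d N t h α j <
        ∑ j ∈ Finset.range n, d (n - 1) j →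
      ∀ i < n, ∑ j ∈ Finset.range n, d α j ≤ 2 * h * ∑ j ∈ Finset.range n, d i j) ∧
    (¬((if σ = 1 then d α (n - 1) else 0) + ∑ j ∈ Finset.range N, hatd d N t h α j <
        ∑ j ∈ Finset.range n, d (n - 1) j) →
      ∀ i < n, ∑ j ∈ Finset.range n, d (n - 1) j ≤ 2 * h * ∑ j ∈ Finset.range n, d i j) := by
  have hnt : n ≤ t ^ h := le_pow_of_ceil_rpow_le (by omega) htl
  subst hNdef
  rcases Nat.le_one_iff_eq_zero_or_eq_one.1 hσ with rfl | rfl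
  · simp only [Nat.sub_zero, zero_ne_one, if_false, zero_add] at hco hα hαmin ⊢
    exact forall_le_of_min_le (C := fun i => ∑ j ∈ range n, d i j)
      (sum_dist_le_sum_hatd le_rfl hd0 hdtri hnt hα) fun i hi =>
        (min_le_left _ _).trans (sum_hatd_le_of_forall_le le_rfl hdsymm hdtri hco hαmin hi)
  · obtain ⟨N, rfl⟩ : ∃ N, n = N + 1 := ⟨n - 1, by omega⟩
    simp only [Nat.add_sub_cancel, if_true] at hco hα hαmin ⊢
    refine forall_le_of_min_le (C := fun i => ∑ j ∈ range (N + 1), d i j) ?_ fun i hi =>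
      min_le_two_mul_sum_dist (by omega) hd0 hdsymm hdtri hco hαmin hi
    rw [sum_range_succ, add_comm]
    exact add_le_add_right (sum_dist_le_sum_hatd N.le_succ hd0 hdtri (N.le_succ.trans hnt) hα) _

/-- Lemma 3: selecting a `(2h)`-approximate `1`-median from `{α, n-1}`. -/
theorem stmt_8 (n h t σ N : ℕ) (hn : 2 ≤ n) (hh : 2 ≤ h)
    (ht : Nat.Prime t) (htl : ⌈(n : ℝ) ^ ((1 : ℝ) / h)⌉₊ ≤ t)
    (hσ : σ ≤ 1) (hco : Nat.Coprime t (n - σ)) (hNdef : N = n - σ)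
    (d : ℕ → ℕ → ℝ)
    (hd0 : ∀ x < n, d x x = 0)
    (hdpos : ∀ x < n, ∀ y < n, x ≠ y → 0 < d x y)
    (hdsymm : ∀ x < n, ∀ y < n, d x y = d y x)
    (hdtri : ∀ x < n, ∀ y < n, ∀ z < n, d x z ≤ d x y + d y z)
    (α : ℕ) (hα : α < N)
    (hαmin : ∀ i < N,
      (if σ = 1 then d α (n - 1) else 0) + ∑ j ∈ Finset.range N, hatd d N t h α j ≤
      (if σ = 1 then d i (n - 1) else 0) + ∑ j ∈ Finset.range N, hatd d N t h i j) :
    ((if σ = 1 then d α (n - 1) else 0) + ∑ j ∈ Finset.range N, hatd d N t h α j <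
        ∑ j ∈ Finset.range n, d (n - 1) j →
      ∀ i < n, ∑ j ∈ Finset.range n, d α j ≤ 2 * h * ∑ j ∈ Finset.range n, d i j) ∧
    (¬((if σ = 1 then d α (n - 1) else 0) + ∑ j ∈ Finset.range N, hatd d N t h α j <
        ∑ j ∈ Finset.range n, d (n - 1) j) →
      ∀ i < n, ∑ j ∈ Finset.range n, d (n - 1) j ≤ 2 * h * ∑ j ∈ Finset.range n, d i j) :=
  stmt_8_general n h t σ N hh htl hσ hco hNdef d hd0 hdsymm hdtri α hα hαmin
end

section
/- Defining f(i,m) := Σ over (s_m,...,s_0) ∈ {0,...,t−1}^{m+1} with Σ_{r=0}^{m} s_r·t^r ≤ Σ_{r=0}^{m} s'_r·t^r of Σ_{k=0}^{m} d^{(N)}(i·t^k + Σ_{ℓ=0}^{k−1} s_{m−ℓ}·t^{k−1−ℓ}, i·t^{k+1} + Σ_{ℓ=0}^{k} s_{m−ℓ}·t^{k−ℓ}), where (s'_{h−1},...,s'_0) is the t-ary representation of N−1, it holds that f(i, h−1) = Σ_{j=0}^{N−1} d̂(i, i·t^h + j mod N) for every i ∈ {0,...,N−1}. -/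
/-- Extend a digit tuple `s : Fin m → Fin t` to a function `ℕ → ℕ` (zero beyond `m`). -/
def extF {t : ℕ} (m : ℕ) (s : Fin m → Fin t) : ℕ → ℕ :=
  fun ℓ => if hℓ : ℓ < m then (s ⟨ℓ, hℓ⟩ : ℕ) else 0

/-- The `(m+1)`-level chain sum
`Σ_{k=0}^{m} D(i·t^k + Σ_{ℓ=0}^{k−1} s_{m−ℓ}·t^{k−1−ℓ}, i·t^{k+1} + Σ_{ℓ=0}^{k} s_{m−ℓ}·t^{k−ℓ})`
for a digit assignment `s` (here `D` plays the role of `d^{(N)}`). -/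
def chainTerm (D : ℕ → ℕ → ℝ) (t i m : ℕ) (s : ℕ → ℕ) : ℝ :=
  ∑ k ∈ Finset.range (m + 1),
    D (i * t ^ k + ∑ ℓ ∈ Finset.range k, s (m - ℓ) * t ^ (k - 1 - ℓ))
      (i * t ^ (k + 1) + ∑ ℓ ∈ Finset.range (k + 1), s (m - ℓ) * t ^ (k - ℓ))

/-- `f(i,m)`: the chain sum over all digit tuples `(s_m,...,s_0) ∈ {0,...,t−1}^{m+1}`
whose value `Σ_r s_r·t^r` does not exceed `Σ_r s'_r·t^r`. -/
def fsum (D : ℕ → ℕ → ℝ) (t i m : ℕ) (s' : ℕ → ℕ) : ℝ :=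
  ∑ s : Fin (m + 1) → Fin t,
    if ∑ r ∈ Finset.range (m + 1), extF (m + 1) s r * t ^ r ≤
        ∑ r ∈ Finset.range (m + 1), s' r * t ^ r then
      chainTerm D t i m (extF (m + 1) s)
    else 0

/-- `g(i,m)`: the chain sum over all digit tuples `(s_m,...,s_0) ∈ {0,...,t−1}^{m+1}`. -/
def gsum (D : ℕ → ℕ → ℝ) (t i m : ℕ) : ℝ :=
  ∑ s : Fin (m + 1) → Fin t, chainTerm D t i m (extF (m + 1) s)

/-! Base-`t` expansion (`finFunctionFinEquiv`) is a bijection between `{0, …, t^h − 1}` and the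
digit tuples `Fin h → Fin t`, under which the value `Σ_r s_r t^r` of a tuple is the number itself
and its chain sum is `d̂(i, i·t^h + j)`. As `N ≤ n ≤ t^h`, the tuples of value at most
`N − 1 = Σ_r s'_r t^r` are then exactly the expansions of `j < N`. -/

theorem sum_range_digit_mul_pow (t j h : ℕ) :
    ∑ r ∈ Finset.range h, digit t j r * t ^ r = j % t ^ h := by
  induction h with
  | zero => simp [Nat.mod_one]
  | succ h ih =>
    rw [Finset.sum_range_succ, ih, pow_succ, Nat.mod_mul, digit, mul_comm]

theorem extF_finFunctionFinEquiv_symm {t m : ℕ} (j : Fin (t ^ m)) {ℓ : ℕ} (hℓ : ℓ < m) :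
    extF m (finFunctionFinEquiv.symm j) ℓ = digit t j ℓ := by
  simp [extF, hℓ, digit, finFunctionFinEquiv]

theorem sum_range_extF_finFunctionFinEquiv_symm {t m : ℕ} (j : Fin (t ^ m)) :
    ∑ r ∈ Finset.range m, extF m (finFunctionFinEquiv.symm j) r * t ^ r = j := by
  rw [Finset.sum_congr rfl fun r hr =>
      by rw [extF_finFunctionFinEquiv_symm j (Finset.mem_range.1 hr)],
    sum_range_digit_mul_pow, Nat.mod_eq_of_lt j.isLt]

theorem chainTerm_congr (D : ℕ → ℕ → ℝ) (t i m : ℕ) {s s' : ℕ → ℕ}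
    (h : ∀ ℓ ≤ m, s ℓ = s' ℓ) : chainTerm D t i m s = chainTerm D t i m s' := by
  unfold chainTerm
  refine Finset.sum_congr rfl fun k _ => ?_
  congr 2 <;> exact Finset.sum_congr rfl fun ℓ _ => by rw [h _ (Nat.sub_le m ℓ)]

theorem hatd_eq_chainTerm (d : ℕ → ℕ → ℝ) (N t m i j : ℕ) :
    hatd d N t (m + 1) i j = chainTerm (dmod d N) t i m (digit t j) := by
  simp only [hatd, chainTerm, Nat.add_sub_cancel]

theorem fsum_digit_eq_sum_range (D : ℕ → ℕ → ℝ) {t i m M : ℕ} (hM : M < t ^ (m + 1)) :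
    fsum D t i m (digit t M) =
      ∑ j ∈ Finset.range (M + 1), chainTerm D t i m (digit t j) := by
  have hterm (j : Fin (t ^ (m + 1))) :
      (if ∑ r ∈ Finset.range (m + 1), extF (m + 1) (finFunctionFinEquiv.symm j) r * t ^ r ≤
          ∑ r ∈ Finset.range (m + 1), digit t M r * t ^ r then
        chainTerm D t i m (extF (m + 1) (finFunctionFinEquiv.symm j)) else 0) =
      if (j : ℕ) < M + 1 then chainTerm D t i m (digit t j) else 0 := by
    rw [sum_range_extF_finFunctionFinEquiv_symm, sum_range_digit_mul_pow,
      Nat.mod_eq_of_lt hM, chainTerm_congr D t i m fun ℓ hℓ =>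
        extF_finFunctionFinEquiv_symm j (Nat.lt_succ_of_le hℓ)]
    simp only [Nat.lt_succ_iff]
  rw [fsum, ← finFunctionFinEquiv.symm.sum_comp, Fintype.sum_congr _ _ hterm,
    Fin.sum_univ_eq_sum_range (fun j => if j < M + 1 then chainTerm D t i m (digit t j) else 0),
    ← Finset.sum_range_add_sum_Ico _ (Nat.succ_le_of_lt hM),
    Finset.sum_eq_zero fun j hj => if_neg (Finset.mem_Ico.1 hj).1.not_gt, add_zero]
  exact Finset.sum_congr rfl fun j hj => if_pos (Finset.mem_range.1 hj)

theorem le_pow_of_natCeil_rpow_one_div_le {n t h : ℕ} (hh : h ≠ 0)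
    (hnt : ⌈(n : ℝ) ^ ((1 : ℝ) / h)⌉₊ ≤ t) : n ≤ t ^ h := by
  have hroot : (n : ℝ) ^ ((1 : ℝ) / h) ≤ t := (Nat.le_ceil _).trans (by exact_mod_cast hnt)
  have : (n : ℝ) ≤ (t : ℝ) ^ h :=
    calc (n : ℝ) = ((n : ℝ) ^ ((1 : ℝ) / h)) ^ h := by
          rw [one_div, Real.rpow_inv_natCast_pow n.cast_nonneg hh]
      _ ≤ (t : ℝ) ^ h := by gcongr
  exact_mod_cast this

theorem stmt_10_general (n h t σ N : ℕ) (hh : 2 ≤ h)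
    (htl : ⌈(n : ℝ) ^ ((1 : ℝ) / h)⌉₊ ≤ t)
    (hNdef : N = n - σ)
    (d : ℕ → ℕ → ℝ) :
    ∀ i < N,
      fsum (dmod d N) t i (h - 1) (digit t (N - 1)) =
        ∑ j ∈ Finset.range N, hatd d N t h i j := by
  intro i hi
  have hnt : n ≤ t ^ h := le_pow_of_natCeil_rpow_one_div_le (by omega) htl
  obtain ⟨m, rfl⟩ : ∃ m, h = m + 1 := ⟨h - 1, by omega⟩
  rw [Nat.add_sub_cancel, fsum_digit_eq_sum_range _ (by omega), Nat.sub_add_cancel (by omega)]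
  exact Finset.sum_congr rfl fun j _ => (hatd_eq_chainTerm d N t m i j).symm

/-- Lemma 4: `f(i, h−1) = Σ_{j=0}^{N−1} d̂(i, i·t^h + j mod N)` for `i ∈ {0,...,N−1}`,
where `s'` is the `t`-ary representation of `N−1`. -/
theorem stmt_10 (n h t σ N : ℕ) (hn : 2 ≤ n) (hh : 2 ≤ h)
    (ht : Nat.Prime t) (htl : ⌈(n : ℝ) ^ ((1 : ℝ) / h)⌉₊ ≤ t)
    (hσ : σ ≤ 1) (hNdef : N = n - σ)
    (d : ℕ → ℕ → ℝ)
    (hd0 : ∀ x < n, d x x = 0)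
    (hdpos : ∀ x < n, ∀ y < n, x ≠ y → 0 < d x y)
    (hdsymm : ∀ x < n, ∀ y < n, d x y = d y x)
    (hdtri : ∀ x < n, ∀ y < n, ∀ z < n, d x z ≤ d x y + d y z) :
    ∀ i < N,
      fsum (dmod d N) t i (h - 1) (digit t (N - 1)) =
        ∑ j ∈ Finset.range N, hatd d N t h i j :=
  stmt_10_general n h t σ N hh htl hNdef d
end
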